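/- arXiv:1704.04215 — 2 statements merged into one kernel-verified Lean document; each statement's English description precedes it below -/
import Mathlib

section
/- For every parameterized item x = (r, d, i, j, ρ) with ρ ∈ ⟨f₁,…,f_{d+1}⟩ (the parameter-hull invariant for the rule r = N_{f_{k+1}} → X₁^{f₁}…X_k^{f_k} with 0 ≤ d ≤ k), the induced set of ordinary items ⟦x⟧ is nonempty. -/
/-- Hull membership: `ρ` has length `2*u` and for each `i < u`, the partial function
`f i` (modeling `f_{i+1} : Φ^(2i+1) ⇀ Φ`) is defined at the first `2i+1` entries of `ρ`
with value `ρ_{2i+1}`. -/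
def InHull {Φ : Type} (f : ℕ → List Φ → Option Φ) (u : ℕ) (ρ : List Φ) : Prop :=
  ρ.length = 2 * u ∧ ∀ i < u, ρ[(2 * i + 1)]? = f i (ρ.take (2 * i + 1))

/-- A parameterized rule `N_{f_{k+1}} → X₁^{f₁} … X_k^{f_k}`; symbols are nonterminals
(`Sum.inl`) or terminals (`Sum.inr`), and `f i` models the partial function `f_{i+1}`. -/
structure ParamRule (NT TM Φ : Type) where
  lhs : NT
  rhs : List (NT ⊕ TM)
  f : ℕ → List Φ → Option Φ

/-- A rule of the induced (ordinary) grammar: `lhs^inP_outP → rhs [⊥]`, where the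
trailing failure symbol `⊥` is recorded by the flag `fail`, and `isTop` marks the
special rules `⊤ → S^{φstart}_β` of the induced grammar. -/
structure IndRule (NT TM Φ : Type) where
  isTop : Bool
  lhs : NT
  inP : Φ
  outP : Φ
  rhs : List ((NT ⊕ TM) × Φ × Φ)
  fail : Bool

/-- `q` is one of the rules induced by the parameterized rule `r`. -/
def InducedBy {NT TM Φ : Type} (r : ParamRule NT TM Φ) (q : IndRule NT TM Φ) : Prop :=
  q.isTop = false ∧ q.lhs = r.lhs ∧
  ((q.fail = false ∧ q.rhs.length = r.rhs.length ∧
      ∃ ρ : List Φ, InHull r.f (r.rhs.length + 1) ρ ∧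
        ρ[0]? = some q.inP ∧ ρ[(2 * r.rhs.length + 1)]? = some q.outP ∧
        ∀ i < r.rhs.length, ∃ X a b,
          r.rhs[i]? = some X ∧ ρ[(2 * i + 1)]? = some a ∧
          ρ[(2 * i + 2)]? = some b ∧ q.rhs[i]? = some (X, a, b)) ∨
   (q.fail = true ∧ ∃ h, 1 ≤ h ∧ h ≤ r.rhs.length ∧ q.rhs.length = h ∧
      ∃ ρ : List Φ, InHull r.f h ρ ∧ ρ[0]? = some q.inP ∧
        (∀ i, i + 1 < h → ∃ X a b,
          r.rhs[i]? = some X ∧ ρ[(2 * i + 1)]? = some a ∧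
          ρ[(2 * i + 2)]? = some b ∧ q.rhs[i]? = some (X, a, b)) ∧
        ∃ X a βh, r.rhs[(h - 1)]? = some X ∧ ρ[(2 * h - 1)]? = some a ∧
          q.rhs[(h - 1)]? = some (X, a, βh) ∧ r.f h (ρ ++ [βh]) = none))

/-- A parameterized (PELLA) item `(r, d, i, j, ρ)`. -/
structure PItem (NT TM Φ : Type) where
  r : ParamRule NT TM Φ
  d : ℕ
  i : ℕ
  j : ℕ
  ρ : List Φ

/-- An ordinary (ELLA) Earley item `(q, d, i, j)` of the induced grammar. -/
structure EItem (NT TM Φ : Type) where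
  rule : IndRule NT TM Φ
  d : ℕ
  i : ℕ
  j : ℕ

/-- The invariant demanded of parameterized items: `d ≤ k` and `ρ ∈ ⟨f₁,…,f_{d+1}⟩`. -/
def PItem.Valid {NT TM Φ : Type} (x : PItem NT TM Φ) : Prop :=
  x.d ≤ x.r.rhs.length ∧ InHull x.r.f (x.d + 1) x.ρ

/-- `ρ` is the length-`2*(d+1)` prefix of the parameter sequence of the induced rule `q`. -/
def ParamsMatch {NT TM Φ : Type} (q : IndRule NT TM Φ) (d : ℕ) (ρ : List Φ) : Prop :=
  ρ.length = 2 * (d + 1) ∧ ρ[0]? = some q.inP ∧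
  (∀ i < d, ∃ X a b, q.rhs[i]? = some (X, a, b) ∧
      ρ[(2 * i + 1)]? = some a ∧ ρ[(2 * i + 2)]? = some b) ∧
  ((∃ X a b, q.rhs[d]? = some (X, a, b) ∧ ρ[(2 * d + 1)]? = some a) ∨
   (d = q.rhs.length ∧ q.fail = false ∧ ρ[(2 * d + 1)]? = some q.outP))

/-- The ordinary item `y` belongs to the induced item set `⟦x⟧` of the parameterized
item `x`. -/
def MemInduced {NT TM Φ : Type} (x : PItem NT TM Φ) (y : EItem NT TM Φ) : Prop :=
  InducedBy x.r y.rule ∧ y.d = x.d ∧ y.i = x.i ∧ y.j = x.j ∧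
  (y.rule.fail = true → x.d + 1 ≤ y.rule.rhs.length) ∧
  ParamsMatch y.rule x.d x.ρ

/-!
Extend `ρ` greedily: choose each missing `β` arbitrarily (`Φ` is nonempty) and set the next
`α := f(…)`. Either every `f` up to `f_{k+1}` is defined along the way, and the sequence is
that of an ordinary induced rule, or a first `f_{h+1}` is undefined, and the sequence so far
together with the last `β` gives a `⊥`-rule with `h ≥ d + 1`. In both cases `ρ` is a prefix
of the parameter sequence, so the item of that rule at position `d` lies in `⟦x⟧`.
-/

theorem List.IsPrefix.getElem?_eq {α : Type*} {l₁ l₂ : List α} (h : l₁ <+: l₂) {i : ℕ}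
    (hi : i < l₁.length) : l₁[i]? = l₂[i]? := by
  obtain ⟨t, rfl⟩ := h
  exact (List.getElem?_append_left hi).symm

theorem InHull.append_pair {Φ : Type} {f : ℕ → List Φ → Option Φ} {u : ℕ} {ρ : List Φ}
    (hρ : InHull f u ρ) {β α : Φ} (hf : f u (ρ ++ [β]) = some α) :
    InHull f (u + 1) (ρ ++ [β, α]) := by
  obtain ⟨hlen, hvals⟩ := hρ
  refine ⟨by simp [hlen, Nat.mul_succ], fun i hi => ?_⟩
  rcases Nat.lt_succ_iff_lt_or_eq.mp hi with hi | rfl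
  · have hlt : 2 * i + 1 < ρ.length := by omega
    rw [List.getElem?_append_left hlt, List.take_append_of_le_length hlt.le]
    exact hvals i hi
  · have htake : (ρ ++ [β, α]).take (2 * i + 1) = ρ ++ [β] := by
      rw [List.take_append, List.take_of_length_le (by omega), hlen]
      simp [show 2 * i + 1 - 2 * i = 1 by omega]
    rw [htake, hf, List.getElem?_append_right (by omega), hlen]
    simp [show 2 * i + 1 - 2 * i = 1 by omega]

theorem InHull.exists_extend_or_undefined {Φ : Type} [Nonempty Φ] {f : ℕ → List Φ → Option Φ}
    {u : ℕ} {ρ : List Φ} (hρ : InHull f u ρ) {t : ℕ} (hut : u ≤ t) :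
    (∃ σ, ρ <+: σ ∧ InHull f t σ) ∨
      ∃ h σ β, u ≤ h ∧ h < t ∧ ρ <+: σ ∧ InHull f h σ ∧ f h (σ ++ [β]) = none := by
  induction t, hut using Nat.le_induction with
  | base => exact Or.inl ⟨ρ, List.prefix_refl ρ, hρ⟩
  | succ t hut ih =>
    rcases ih with ⟨σ, hpre, hσ⟩ | ⟨h, σ, β, huh, hht, hpre, hσ, hf⟩
    · let β : Φ := Classical.arbitrary Φ
      cases hf : f t (σ ++ [β]) with
      | none => exact Or.inr ⟨t, σ, β, hut, t.lt_succ_self, hpre, hσ, hf⟩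
      | some α =>
        exact Or.inl ⟨σ ++ [β, α], hpre.trans (List.prefix_append _ _), hσ.append_pair hf⟩
    · exact Or.inr ⟨h, σ, β, huh, hht.trans t.lt_succ_self, hpre, hσ, hf⟩

def pairParams {α β : Type*} : List α → List β → List (α × β × β)
  | X :: Xs, a :: b :: bs => (X, a, b) :: pairParams Xs bs
  | _, _ => []

theorem length_pairParams {α β : Type*} (Xs : List α) (bs : List β) :
    (pairParams Xs bs).length = min Xs.length (bs.length / 2) := by
  induction Xs generalizing bs with
  | nil => simp [pairParams]
  | cons X Xs ih =>
    match bs with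
    | [] | [_] => simp [pairParams]
    | a :: b :: bs => simp only [pairParams, List.length_cons, ih]; omega

theorem getElem?_pairParams_eq_some {α β : Type*} {Xs : List α} {bs : List β} {i : ℕ}
    {X : α} {a b : β} :
    (pairParams Xs bs)[i]? = some (X, a, b) ↔
      Xs[i]? = some X ∧ bs[2 * i]? = some a ∧ bs[2 * i + 1]? = some b := by
  induction Xs generalizing bs i with
  | nil => simp [pairParams]
  | cons X' Xs ih =>
    match bs, i with
    | [], _ | [_], _ | _ :: _ :: _, 0 => simp [pairParams]
    | a' :: b' :: bs, i + 1 => simp [pairParams, ih, Nat.mul_succ]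

namespace ParamRule

variable {NT TM Φ : Type} (r : ParamRule NT TM Φ)

/-- The induced rule `N^inP_outP → (X₁)^{α₁}_{β₁} … [⊥]` read off the parameter sequence
`σ = α α₁ β₁ α₂ β₂ …`. -/
def inducedRule (inP outP : Φ) (σ : List Φ) (fail : Bool) : IndRule NT TM Φ :=
  ⟨false, r.lhs, inP, outP, pairParams r.rhs σ.tail, fail⟩

variable {r}

theorem length_inducedRule_rhs (inP outP : Φ) (σ : List Φ) (fail : Bool) :
    (r.inducedRule inP outP σ fail).rhs.length = min r.rhs.length ((σ.length - 1) / 2) := by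
  simp [inducedRule, length_pairParams]

theorem exists_inducedRule_rhs_getElem? {inP outP : Φ} {σ : List Φ} {fail : Bool} {i : ℕ}
    (hi : i < r.rhs.length) (hσ : 2 * i + 2 < σ.length) :
    ∃ X a b, r.rhs[i]? = some X ∧ σ[2 * i + 1]? = some a ∧ σ[2 * i + 2]? = some b ∧
      (r.inducedRule inP outP σ fail).rhs[i]? = some (X, a, b) := by
  refine ⟨r.rhs[i], σ[2 * i + 1], σ[2 * i + 2], by simp, by simp, by simp, ?_⟩
  simp [inducedRule, getElem?_pairParams_eq_some, List.getElem?_tail, hi, hσ]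

theorem inducedBy_inducedRule_of_inHull {inP outP : Φ} {σ : List Φ}
    (hσ : InHull r.f (r.rhs.length + 1) σ) (h0 : σ[0]? = some inP)
    (hout : σ[2 * r.rhs.length + 1]? = some outP) :
    InducedBy r (r.inducedRule inP outP σ false) := by
  have hlen := hσ.1
  refine ⟨rfl, rfl, Or.inl ⟨rfl, ?_, σ, hσ, h0, hout, fun i hi => ?_⟩⟩
  · rw [length_inducedRule_rhs]; omega
  · exact exists_inducedRule_rhs_getElem? hi (by omega)

theorem inducedBy_inducedRule_of_undefined {inP outP β : Φ} {σ : List Φ} {h : ℕ}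
    (hσ : InHull r.f h σ) (h0 : σ[0]? = some inP) (hpos : 1 ≤ h) (hh : h ≤ r.rhs.length)
    (hf : r.f h (σ ++ [β]) = none) :
    InducedBy r (r.inducedRule inP outP (σ ++ [β]) true) := by
  have hlen := hσ.1
  have hlenβ : (σ ++ [β]).length = σ.length + 1 := by simp
  obtain ⟨h, rfl⟩ : ∃ h', h = h' + 1 := ⟨h - 1, by omega⟩
  have happ : ∀ n < 2 * (h + 1), (σ ++ [β])[n]? = σ[n]? := fun n hn =>
    List.getElem?_append_left (by omega)
  refine ⟨rfl, rfl, Or.inr ⟨rfl, h + 1, hpos, hh, ?_, σ, hσ, h0, fun i hi => ?_, ?_⟩⟩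
  · rw [length_inducedRule_rhs]; omega
  · obtain ⟨X, a, b, hX, ha, hb, hq⟩ :=
      exists_inducedRule_rhs_getElem? (inP := inP) (outP := outP) (fail := true)
        (show i < r.rhs.length by omega) (show 2 * i + 2 < (σ ++ [β]).length by omega)
    rw [happ (2 * i + 1) (by omega)] at ha
    rw [happ (2 * i + 2) (by omega)] at hb
    exact ⟨X, a, b, hX, ha, hb, hq⟩
  · obtain ⟨X, a, b, hX, ha, hb, hq⟩ :=
      exists_inducedRule_rhs_getElem? (inP := inP) (outP := outP) (fail := true)
        (show h < r.rhs.length by omega) (show 2 * h + 2 < (σ ++ [β]).length by omega)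
    have hβ : b = β := by
      rw [List.getElem?_append_right (by omega)] at hb
      simpa [show 2 * h + 2 - σ.length = 0 by omega, eq_comm] using hb
    rw [happ (2 * h + 1) (by omega)] at ha
    subst hβ
    exact ⟨X, a, b, hX, ha, hq, hf⟩

theorem exists_inducedRule_rhs_getElem?_of_prefix {inP outP : Φ} {ρ σ : List Φ} {fail : Bool}
    {d : ℕ} (hpre : ρ <+: σ) (hρ : ρ.length = 2 * (d + 1)) (hd : d ≤ r.rhs.length) :
    ∀ i < d, ∃ X a b, (r.inducedRule inP outP σ fail).rhs[i]? = some (X, a, b) ∧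
      ρ[2 * i + 1]? = some a ∧ ρ[2 * i + 2]? = some b := by
  intro i hi
  have hσ := hpre.length_le
  obtain ⟨X, a, b, -, ha, hb, hq⟩ := exists_inducedRule_rhs_getElem? (r := r) (inP := inP)
    (outP := outP) (fail := fail) (show i < r.rhs.length by omega)
    (show 2 * i + 2 < σ.length by omega)
  rw [← hpre.getElem?_eq (by omega)] at ha hb
  exact ⟨X, a, b, hq, ha, hb⟩

theorem paramsMatch_inducedRule_of_lt {inP outP : Φ} {ρ σ : List Φ} {fail : Bool} {d : ℕ}
    (hpre : ρ <+: σ) (hρ : ρ.length = 2 * (d + 1)) (h0 : ρ[0]? = some inP)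
    (hd : d < r.rhs.length) (hσ : 2 * d + 2 < σ.length) :
    ParamsMatch (r.inducedRule inP outP σ fail) d ρ := by
  refine ⟨hρ, h0, exists_inducedRule_rhs_getElem?_of_prefix hpre hρ hd.le, Or.inl ?_⟩
  obtain ⟨X, a, b, -, ha, -, hq⟩ := exists_inducedRule_rhs_getElem? (inP := inP) (outP := outP)
    (fail := fail) hd hσ
  rw [← hpre.getElem?_eq (by omega)] at ha
  exact ⟨X, a, b, hq, ha⟩

theorem paramsMatch_inducedRule_of_inHull {inP outP : Φ} {σ : List Φ}
    (hσ : InHull r.f (r.rhs.length + 1) σ) (h0 : σ[0]? = some inP)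
    (hout : σ[2 * r.rhs.length + 1]? = some outP) :
    ParamsMatch (r.inducedRule inP outP σ false) r.rhs.length σ := by
  have hlen := hσ.1
  refine ⟨hlen, h0, exists_inducedRule_rhs_getElem?_of_prefix (List.prefix_refl σ) hlen le_rfl,
    Or.inr ⟨?_, rfl, hout⟩⟩
  rw [length_inducedRule_rhs]; omega

end ParamRule

/-- Every parameterized item satisfying the hull invariant has a nonempty
induced item set `⟦x⟧`. -/
theorem induced_items_nonempty {NT TM Φ : Type} [Nonempty Φ]
    (x : PItem NT TM Φ) (hx : x.Valid) :
    ∃ y : EItem NT TM Φ, MemInduced x y := by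
  obtain ⟨hd, hρ⟩ := hx
  have hlen := hρ.1
  obtain ⟨inP, h0⟩ : ∃ a, x.ρ[0]? = some a := ⟨x.ρ[0], List.getElem?_eq_getElem (by omega)⟩
  rcases hρ.exists_extend_or_undefined (t := x.r.rhs.length + 1) (by omega) with
    ⟨σ, hpre, hσ⟩ | ⟨h, σ, β, hdh, hhk, hpre, hσ, hf⟩
  · have hσlen := hσ.1
    obtain ⟨outP, hout⟩ : ∃ b, σ[2 * x.r.rhs.length + 1]? = some b :=
      ⟨σ[2 * x.r.rhs.length + 1], List.getElem?_eq_getElem (by omega)⟩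
    have hσ0 : σ[0]? = some inP := (hpre.getElem?_eq (by omega)).symm.trans h0
    refine ⟨⟨x.r.inducedRule inP outP σ false, x.d, x.i, x.j⟩,
      ParamRule.inducedBy_inducedRule_of_inHull hσ hσ0 hout, rfl, rfl, rfl, nofun, ?_⟩
    rcases hd.lt_or_eq with hd | hd
    · exact ParamRule.paramsMatch_inducedRule_of_lt hpre hlen h0 hd (by omega)
    · rw [hd, hpre.eq_of_length (by omega)]
      exact ParamRule.paramsMatch_inducedRule_of_inHull hσ hσ0 hout
  · have hσlen := hσ.1
    have hlenβ : (σ ++ [β]).length = σ.length + 1 := by simp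
    have hσ0 : σ[0]? = some inP := (hpre.getElem?_eq (by omega)).symm.trans h0
    refine ⟨⟨x.r.inducedRule inP β (σ ++ [β]) true, x.d, x.i, x.j⟩,
      ParamRule.inducedBy_inducedRule_of_undefined hσ hσ0 (by omega) (by omega) hf,
      rfl, rfl, rfl, fun _ => ?_,
      ParamRule.paramsMatch_inducedRule_of_lt (hpre.trans (List.prefix_append σ [β])) hlen h0
        (by omega) (by omega)⟩
    rw [ParamRule.length_inducedRule_rhs]; omega
end

section
/- Suppose J⁰ ∼ J'⁰, ∼ is preserved under countable unions, the Tokens operations satisfy: I ∼ I' implies U(Tokens T k I) = Tokens' U(T) k I', and π_k T simulates π'_k U(T) for every T. Define recursively T⁰ = ∅, T^{u+1} = Tokens T^u k J^u, J^{u+1} = π_k T^{u+1} J^u, and similarly for the primed versions with T'⁰ = ∅. Then for all u: J^u ∼ J'^u and U(T^u) = T'^u, and consequently (⋃_u J^u) ∼ (⋃_u J'^u). -/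
/-- If `J⁰ ∼ J'⁰`, `∼` is preserved under countable unions,
`I ∼ I'` implies `U(Tokens T k I) = Tokens' U(T) k I'`, and `π_k T` simulates
`π'_k U(T)` for every `T`, then the recursively defined stages satisfy
`J^u ∼ J'^u` and `U(T^u) = T'^u` for all `u`, and `(⋃ u, J^u) ∼ (⋃ u, J'^u)`. -/
theorem stage_simulation {α β τ τ' : Type} (sim : Set α → Set β → Prop)
    (U : Set τ → Set τ') (hU0 : U ∅ = ∅)
    (Tokens : Set τ → ℕ → Set α → Set τ)
    (Tokens' : Set τ' → ℕ → Set β → Set τ')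
    (π : Set τ → Set α → Set α) (π' : Set τ' → Set β → Set β) (k : ℕ)
    (hUnion : ∀ (I : ℕ → Set α) (I' : ℕ → Set β),
      (∀ u, sim (I u) (I' u)) → sim (⋃ u, I u) (⋃ u, I' u))
    (hTok : ∀ T I I', sim I I' → U (Tokens T k I) = Tokens' (U T) k I')
    (hπ : ∀ T I I', sim I I' → sim (π T I) (π' (U T) I'))
    (J : ℕ → Set α) (J' : ℕ → Set β) (T : ℕ → Set τ) (T' : ℕ → Set τ')
    (h0 : sim (J 0) (J' 0))
    (hT0 : T 0 = ∅) (hT'0 : T' 0 = ∅)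
    (hTs : ∀ u, T (u + 1) = Tokens (T u) k (J u))
    (hT's : ∀ u, T' (u + 1) = Tokens' (T' u) k (J' u))
    (hJs : ∀ u, J (u + 1) = π (T (u + 1)) (J u))
    (hJ's : ∀ u, J' (u + 1) = π' (T' (u + 1)) (J' u)) :
    (∀ u, sim (J u) (J' u) ∧ U (T u) = T' u) ∧
    sim (⋃ u, J u) (⋃ u, J' u) := by
  have main : ∀ u, sim (J u) (J' u) ∧ U (T u) = T' u := by
    intro u
    induction u with
    | zero => exact ⟨h0, by rw [hT0, hT'0, hU0]⟩
    | succ n ih =>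
      have hT : U (T (n + 1)) = T' (n + 1) := by
        rw [hTs, hT's, ← ih.2]; exact hTok _ _ _ ih.1
      refine ⟨?_, hT⟩
      rw [hJs, hJ's, ← hT]
      exact hπ _ _ _ ih.1
  exact ⟨main, hUnion _ _ fun u => (main u).1⟩
end
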